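/- Let x ∈ {0,1}^n satisfy Σ_{i=1}^n x_i ≤ p, Σ_{i=1}^m a'_i x_i > 1, and x_i = 0 for all i ∈ {m+1,…,n}, and set π* = M p_x / (p_x + Σ_{i=1}^m a'_i x_i − 1). Then g(x, π*) = (V − Σ_{i=1}^m v_i x_i) · π*/M. -/

import Mathlib

open Classical
noncomputable section

/-- A knapsack instance `a, v ∈ ℕ^m`, `b ∈ ℕ` with `1 ≤ a_i ≤ b - 1`, `1 ≤ v_i`,
and `b` dividing `∑ a_i` (items indexed by `1, …, m`). -/
structure KnapInstance where
  m : ℕ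
  b : ℕ
  a : ℕ → ℕ
  v : ℕ → ℕ
  hm : 1 ≤ m
  ha : ∀ i ∈ Finset.Icc 1 m, 1 ≤ a i ∧ a i ≤ b - 1
  hv : ∀ i ∈ Finset.Icc 1 m, 1 ≤ v i
  hb : b ∣ ∑ i ∈ Finset.Icc 1 m, a i

namespace KnapInstance

variable (K : KnapInstance)

/-- `A' = (∑ a_i)/b` (an integer). -/
def A' : ℕ := (∑ i ∈ Finset.Icc 1 K.m, K.a i) / K.b

/-- Number of items of the constructed instance: `n = 2m - A' + 3`. -/
def nn : ℕ := 2 * K.m - K.A' + 3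

/-- Number of items to select: `p = 2m - 2A' + 3`. -/
def pp : ℕ := 2 * K.m - 2 * K.A' + 3

/-- Uncertainty budget: `Γ = m - A' + 1`. -/
def Gam : ℝ := (K.m : ℝ) - (K.A' : ℝ) + 1

/-- `V = ∑ v_i`. -/
def V : ℕ := ∑ i ∈ Finset.Icc 1 K.m, K.v i

/-- The large constant `M = 3mbV`. -/
def M : ℝ := 3 * (K.m : ℝ) * (K.b : ℝ) * (K.V : ℝ)

/-- Scaled sizes `a'_i = a_i / b`. -/
def a' (i : ℕ) : ℝ := (K.a i : ℝ) / (K.b : ℝ)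

/-- First-stage costs of the constructed instance. -/
def C (i : ℕ) : ℝ := if i ≤ K.m then K.M * K.a' i else ((K.m : ℝ) + 3) * K.M

/-- Lower second-stage costs `c̲` of the constructed instance. -/
def cl (i : ℕ) : ℝ :=
  if i ≤ K.m then (K.v i : ℝ) / (1 - K.a' i) else if i = K.m + 1 then K.M else 0

/-- Deviations `d` of the constructed instance. -/
def d (i : ℕ) : ℝ := if i ≤ K.m then K.M / (1 - K.a' i) else K.M

/-- `g(x, π)`: the optimal value of
`min ∑_{i∈R_x} c̲_i y_i + ∑_{i∈R_x} ρ_i` s.t. `∑_{i∈R_x} y_i = p_x`,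
`π + ρ_i ≥ d_i y_i` for `i ∈ R_x`, `y ∈ [0,1]^{R_x}`, `ρ ≥ 0`, where
`R_x = {i ∈ [n] : x_i = 0}` and `p_x = p - ∑_i x_i`. -/
def g (x : ℕ → ℝ) (π : ℝ) : ℝ :=
  sInf {val | ∃ y ρ : ℕ → ℝ,
    (∀ i ∈ Finset.Icc 1 K.nn, x i = 0 →
      (0 ≤ y i ∧ y i ≤ 1 ∧ 0 ≤ ρ i ∧ K.d i * y i ≤ π + ρ i)) ∧
    (∑ i ∈ (Finset.Icc 1 K.nn).filter (fun i => x i = 0), y i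
      = (K.pp : ℝ) - ∑ i ∈ Finset.Icc 1 K.nn, x i) ∧
    val = ∑ i ∈ (Finset.Icc 1 K.nn).filter (fun i => x i = 0), (K.cl i * y i + ρ i)}

/-- `h_x(π) = ∑ C_i x_i + Γπ + g(x, π)`. -/
def h (x : ℕ → ℝ) (π : ℝ) : ℝ :=
  (∑ i ∈ Finset.Icc 1 K.nn, K.C i * x i) + K.Gam * π + K.g x π

end KnapInstance


variable (K : KnapInstance)

lemma aux_one_mem : 1 ∈ Finset.Icc 1 K.m := by simp [K.hm]

lemma aux_b2 : 2 ≤ K.b := by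
  have := K.ha 1 (aux_one_mem K); omega

lemma aux_Vpos : 0 < K.V :=
  Finset.sum_pos (fun i hi => K.hv i hi) ⟨1, aux_one_mem K⟩

lemma aux_Mpos : 0 < K.M := by
  have h1 := K.hm; have h2 := aux_b2 K; have h3 := aux_Vpos K
  have : (1:ℝ) ≤ K.m := by exact_mod_cast h1
  have : (2:ℝ) ≤ K.b := by exact_mod_cast h2
  have : (1:ℝ) ≤ K.V := by exact_mod_cast h3
  unfold KnapInstance.M
  have hm0 : (0:ℝ) < K.m := by linarith
  have hb0 : (0:ℝ) < K.b := by linarith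
  have hV0 : (0:ℝ) < K.V := by linarith
  positivity

lemma aux_A'b : K.A' * K.b = ∑ i ∈ Finset.Icc 1 K.m, K.a i :=
  Nat.div_mul_cancel K.hb

lemma aux_A'lt : K.A' < K.m := by
  have h1 : ∑ i ∈ Finset.Icc 1 K.m, K.a i ≤ ∑ i ∈ Finset.Icc 1 K.m, (K.b - 1) :=
    Finset.sum_le_sum (fun i hi => (K.ha i hi).2)
  rw [Finset.sum_const, Nat.card_Icc, smul_eq_mul, Nat.add_sub_cancel] at h1
  have h2 := aux_A'b K
  have hb2 := aux_b2 K
  have hm := K.hm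
  by_contra h
  push_neg at h
  have h3 : K.m * K.b ≤ K.A' * K.b := Nat.mul_le_mul_right _ h
  have h4 : K.m * (K.b - 1) < K.m * K.b :=
    mul_lt_mul_of_pos_left (show K.b - 1 < K.b by omega) (show 0 < K.m by omega)
  omega

lemma aux_A'pos : 1 ≤ K.A' := by
  have h1 : ∑ i ∈ Finset.Icc 1 K.m, 1 ≤ ∑ i ∈ Finset.Icc 1 K.m, K.a i :=
    Finset.sum_le_sum (fun i hi => (K.ha i hi).1)
  rw [Finset.sum_const, Nat.card_Icc, smul_eq_mul, Nat.add_sub_cancel] at h1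
  have h2 := aux_A'b K
  have hm := K.hm
  by_contra h
  push_neg at h
  have : K.A' = 0 := by omega
  rw [this] at h2
  simp at h2
  omega

lemma aux_A'cast : (K.A' : ℝ) = ∑ i ∈ Finset.Icc 1 K.m, K.a' i := by
  have hb : (0:ℝ) < K.b := by exact_mod_cast Nat.lt_of_lt_of_le Nat.zero_lt_two (aux_b2 K)
  have h2 := aux_A'b K
  unfold KnapInstance.a'
  rw [← Finset.sum_div]
  rw [eq_div_iff (ne_of_gt hb)]
  exact_mod_cast congrArg (Nat.cast : ℕ → ℝ) h2

lemma aux_a'bound : ∀ i ∈ Finset.Icc 1 K.m, 1/(K.b:ℝ) ≤ 1 - K.a' i ∧ 0 ≤ K.a' i := by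
  intro i hi
  have hb : (0:ℝ) < K.b := by exact_mod_cast Nat.lt_of_lt_of_le Nat.zero_lt_two (aux_b2 K)
  have hb2 := aux_b2 K
  have ha := K.ha i hi
  have h1 : (K.a i : ℝ) ≤ (K.b : ℝ) - 1 := by
    have : (K.a i : ℕ) ≤ K.b - 1 := ha.2
    have := Nat.cast_le (α := ℝ).mpr this
    rwa [Nat.cast_sub (by omega), Nat.cast_one] at this
  constructor
  · unfold KnapInstance.a'
    rw [le_sub_iff_add_le, ← add_div, div_le_one hb]
    linarith
  · unfold KnapInstance.a'; positivity

lemma aux_vM (K : KnapInstance) : ∀ i ∈ Finset.Icc 1 K.m, (K.v i:ℝ)/K.M ≤ 1/(K.b:ℝ) := by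
  intro i hi
  have hb2 := aux_b2 K
  have hbR : (0:ℝ) < K.b := by exact_mod_cast Nat.lt_of_lt_of_le Nat.zero_lt_two hb2
  have hM := aux_Mpos K
  have hvV : (K.v i:ℝ) ≤ (K.V:ℝ) := by
    have := Finset.single_le_sum (f := fun j => (K.v j : ℕ)) (fun j _ => Nat.zero_le _) hi
    exact_mod_cast this
  rw [div_le_div_iff₀ hM hbR]
  have hm1 : (1:ℝ) ≤ K.m := by exact_mod_cast K.hm
  have hV0 : (0:ℝ) ≤ K.V := Nat.cast_nonneg _
  have hexp : K.M = 3 * (K.m:ℝ) * K.b * K.V := rfl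
  rw [hexp]
  have h1 : (K.v i:ℝ) * K.b ≤ (K.V:ℝ) * K.b := mul_le_mul_of_nonneg_right hvV hbR.le
  have h2 : (0:ℝ) ≤ (K.V:ℝ) * K.b * (3*(K.m:ℝ) - 1) :=
    mul_nonneg (mul_nonneg hV0 hbR.le) (by linarith)
  nlinarith [h1, h2]

/-- If `x` is feasible for the constructed instance with `∑ a'_i x_i > 1` and `x_i = 0` for
`i > m`, then, for `π* = M p_x / (p_x + ∑ a'_i x_i - 1)`,
`g(x, π*) = (V - ∑ v_i x_i) · π*/M`. -/
theorem stmt18 (K : KnapInstance) (x : ℕ → ℝ)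
    (hbin : ∀ i ∈ Finset.Icc 1 K.nn, x i = 0 ∨ x i = 1)
    (hsum : ∑ i ∈ Finset.Icc 1 K.nn, x i ≤ (K.pp : ℝ))
    (hgt : 1 < ∑ i ∈ Finset.Icc 1 K.m, K.a' i * x i)
    (hzero : ∀ i ∈ Finset.Icc (K.m + 1) K.nn, x i = 0)
    (px πs : ℝ)
    (hpx : px = (K.pp : ℝ) - ∑ i ∈ Finset.Icc 1 K.nn, x i)
    (hπs : πs = K.M * px / (px + (∑ i ∈ Finset.Icc 1 K.m, K.a' i * x i) - 1)) :
    K.g x πs = ((K.V : ℝ) - ∑ i ∈ Finset.Icc 1 K.m, (K.v i : ℝ) * x i) * (πs / K.M) := by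
  classical
  -- abbreviations
  set S : ℝ := ∑ i ∈ Finset.Icc 1 K.m, K.a' i * x i with hSdef
  set k : ℝ := ∑ i ∈ Finset.Icc 1 K.m, x i with hkdef
  set W : ℝ := (K.V : ℝ) - ∑ i ∈ Finset.Icc 1 K.m, (K.v i : ℝ) * x i with hWdef
  -- basic facts
  have hb2 := aux_b2 K
  have hbR : (0:ℝ) < K.b := by exact_mod_cast Nat.lt_of_lt_of_le Nat.zero_lt_two hb2
  have hM : 0 < K.M := aux_Mpos K
  have hMne : K.M ≠ 0 := ne_of_gt hM
  have hA'lt := aux_A'lt K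
  have hA'cast := aux_A'cast K
  have hm := K.hm
  have hnn : K.nn = 2 * K.m - K.A' + 3 := rfl
  have hppn : K.pp = 2 * K.m - 2 * K.A' + 3 := rfl
  have hmnn : K.m + 1 ≤ K.nn := by omega
  have hppR : (K.pp : ℝ) = 2*(K.m:ℝ) - 2*(K.A':ℝ) + 3 := by
    have h : 2*K.A' ≤ 2*K.m := by omega
    rw [hppn, Nat.cast_add, Nat.cast_sub h]; push_cast; ring
  -- index set splitting
  have hsplitIcc : Finset.Icc 1 K.nn = Finset.Icc 1 K.m ∪ Finset.Icc (K.m+1) K.nn := by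
    ext i; simp only [Finset.mem_Icc, Finset.mem_union]; omega
  have hdisj : Disjoint (Finset.Icc 1 K.m) (Finset.Icc (K.m+1) K.nn) := by
    simp only [Finset.disjoint_left, Finset.mem_Icc]; intro i h1 h2; omega
  have hm1notin : (K.m + 1) ∉ Finset.Icc (K.m+2) K.nn := by simp
  have hinsert : Finset.Icc (K.m+1) K.nn = insert (K.m+1) (Finset.Icc (K.m+2) K.nn) := by
    ext i; simp only [Finset.mem_Icc, Finset.mem_insert]; omega
  have key : ∀ f : ℕ → ℝ, ∑ i ∈ (Finset.Icc 1 K.nn).filter (fun i => x i = 0), f i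
      = (∑ i ∈ Finset.Icc 1 K.m, if x i = 0 then f i else 0)
        + (f (K.m+1) + ∑ i ∈ Finset.Icc (K.m+2) K.nn, f i) := by
    intro f
    rw [Finset.sum_filter, hsplitIcc, Finset.sum_union hdisj]
    congr 1
    calc ∑ i ∈ Finset.Icc (K.m+1) K.nn, (if x i = 0 then f i else 0)
        = ∑ i ∈ Finset.Icc (K.m+1) K.nn, f i :=
          Finset.sum_congr rfl (fun i hi => if_pos (hzero i hi))
      _ = f (K.m+1) + ∑ i ∈ Finset.Icc (K.m+2) K.nn, f i := by
          rw [hinsert, Finset.sum_insert hm1notin]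
  have hsub : Finset.Icc 1 K.m ⊆ Finset.Icc 1 K.nn := Finset.Icc_subset_Icc_right (by omega)
  have ifsum : ∀ f : ℕ → ℝ, (∑ i ∈ Finset.Icc 1 K.m, if x i = 0 then f i else 0)
      = ∑ i ∈ Finset.Icc 1 K.m, f i - ∑ i ∈ Finset.Icc 1 K.m, f i * x i := by
    intro f
    rw [← Finset.sum_sub_distrib]
    refine Finset.sum_congr rfl (fun i hi => ?_)
    rcases hbin i (hsub hi) with h | h <;> simp [h]
  have hcard2 : ((Finset.Icc (K.m+2) K.nn).card : ℝ) = (K.m:ℝ) - (K.A':ℝ) + 2 := by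
    rw [Nat.card_Icc]
    have h1 : K.nn + 1 - (K.m+2) = K.m - K.A' + 2 := by omega
    have h2 : K.A' ≤ K.m := le_of_lt hA'lt
    rw [h1, Nat.cast_add, Nat.cast_sub h2]; push_cast; ring
  -- scalar facts
  have hxsplit : ∑ i ∈ Finset.Icc 1 K.nn, x i = k := by
    rw [hsplitIcc, Finset.sum_union hdisj, hkdef]
    have h0 : ∑ i ∈ Finset.Icc (K.m+1) K.nn, x i = 0 :=
      Finset.sum_eq_zero (fun i hi => hzero i hi)
    rw [h0, add_zero]
  have hpxk : px = (K.pp : ℝ) - k := by rw [hpx, hxsplit]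
  have hpx0 : 0 ≤ px := by rw [hpx]; linarith
  have hS1 : 1 < S := hgt
  have hD : 0 < px + S - 1 := by linarith
  have hDne : px + S - 1 ≠ 0 := ne_of_gt hD
  have hπsD : πs * (px + S - 1) = K.M * px := by
    rw [hπs]; field_simp
  have hπs0 : 0 ≤ πs := by
    rw [hπs]; positivity
  have hπsM : πs ≤ K.M := by
    rw [hπs, div_le_iff₀ hD]; nlinarith
  have ht1 : πs / K.M ≤ 1 := by rw [div_le_one hM]; exact hπsM
  have ht0 : 0 ≤ πs / K.M := div_nonneg hπs0 hM.le
  -- per-item a' facts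
  have ha'1 : ∀ i ∈ Finset.Icc 1 K.m, 0 < 1 - K.a' i := by
    intro i hi
    have h1 := (aux_a'bound K i hi).1
    have h2 : (0:ℝ) < 1/K.b := by positivity
    linarith
  have ha'0 : ∀ i ∈ Finset.Icc 1 K.m, 0 ≤ K.a' i := fun i hi => (aux_a'bound K i hi).2
  -- base sum identities
  have E1 : ∑ i ∈ Finset.Icc 1 K.m, (1 - K.a' i) = (K.m:ℝ) - (K.A':ℝ) := by
    rw [Finset.sum_sub_distrib, Finset.sum_const, Nat.card_Icc, hA'cast]
    simp
  have E2 : ∑ i ∈ Finset.Icc 1 K.m, (1 - K.a' i) * x i = k - S := by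
    simp_rw [sub_mul, one_mul]
    rw [Finset.sum_sub_distrib, ← hkdef, ← hSdef]
  have E3 : ∑ i ∈ Finset.Icc 1 K.m, (K.v i : ℝ) = (K.V : ℝ) := by
    rw [KnapInstance.V]; push_cast; ring
  -- the feasibility set
  set F : Finset ℕ := (Finset.Icc 1 K.nn).filter (fun i => x i = 0) with hF
  -- the target value
  set T : ℝ := W * (πs / K.M) with hT
  -- primal witness
  set y : ℕ → ℝ := fun i => if i ≤ K.m then πs / K.M * (1 - K.a' i)
    else if i = K.m+1 then 0 else πs / K.M with hy
  have hval : T = ∑ i ∈ F, (K.cl i * y i + (fun _ => (0:ℝ)) i) := by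
    rw [hF, key (fun i => K.cl i * y i + (fun _ => (0:ℝ)) i)]
    have e1 : (∑ i ∈ Finset.Icc 1 K.m, if x i = 0 then K.cl i * y i + (fun _ => (0:ℝ)) i else 0)
        = ∑ i ∈ Finset.Icc 1 K.m, if x i = 0 then (K.v i:ℝ) * (πs / K.M) else 0 := by
      refine Finset.sum_congr rfl (fun i hi => ?_)
      have him : i ≤ K.m := (Finset.mem_Icc.mp hi).2
      have h1a := ha'1 i hi
      have h1ne : (1 - K.a' i) ≠ 0 := ne_of_gt h1a
      have : K.cl i * y i + (fun _ => (0:ℝ)) i = (K.v i:ℝ) * (πs / K.M) := by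
        simp only [hy, KnapInstance.cl, if_pos him]
        field_simp
        ring
      rw [this]
    have e2 : K.cl (K.m+1) * y (K.m+1) + (fun _ => (0:ℝ)) (K.m+1) = 0 := by
      simp [hy]
    have e3 : ∑ i ∈ Finset.Icc (K.m+2) K.nn, (K.cl i * y i + (fun _ => (0:ℝ)) i) = 0 := by
      refine Finset.sum_eq_zero (fun i hi => ?_)
      have h2 : K.m + 2 ≤ i := (Finset.mem_Icc.mp hi).1
      have hne : ¬ (i ≤ K.m) := by omega
      have hne1 : i ≠ K.m + 1 := by omega
      simp [KnapInstance.cl, hne, hne1]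
    rw [e1, e2, e3, ifsum (fun i => (K.v i:ℝ) * (πs / K.M))]
    rw [← Finset.sum_mul, E3]
    have e4 : ∑ i ∈ Finset.Icc 1 K.m, ((K.v i:ℝ) * (πs / K.M)) * x i
        = (∑ i ∈ Finset.Icc 1 K.m, (K.v i:ℝ) * x i) * (πs / K.M) := by
      rw [Finset.sum_mul]
      exact Finset.sum_congr rfl (fun i hi => by ring)
    rw [e4, hT, hWdef]
    ring
  have hfeas : ∀ i ∈ Finset.Icc 1 K.nn, x i = 0 →
      (0 ≤ y i ∧ y i ≤ 1 ∧ 0 ≤ (0:ℝ) ∧ K.d i * y i ≤ πs + 0) := by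
    intro i hi hxi
    by_cases him : i ≤ K.m
    · have hi' : i ∈ Finset.Icc 1 K.m :=
        Finset.mem_Icc.mpr ⟨(Finset.mem_Icc.mp hi).1, him⟩
      have h1a := ha'1 i hi'
      have h0a := ha'0 i hi'
      have h1ne : (1 - K.a' i) ≠ 0 := ne_of_gt h1a
      have hyi : y i = πs / K.M * (1 - K.a' i) := by simp only [hy]; rw [if_pos him]
      have hdi : K.d i = K.M / (1 - K.a' i) := by rw [KnapInstance.d, if_pos him]
      refine ⟨?_, ?_, le_refl 0, ?_⟩
      · rw [hyi]; exact mul_nonneg ht0 h1a.le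
      · rw [hyi]
        exact mul_le_one₀ ht1 h1a.le (by linarith)
      · rw [hyi, hdi]
        have : K.M / (1 - K.a' i) * (πs / K.M * (1 - K.a' i)) = πs := by
          field_simp
        rw [this]; linarith
    · by_cases him1 : i = K.m + 1
      · have hyi : y i = 0 := by simp only [hy]; rw [if_neg him, if_pos him1]
        rw [hyi]
        exact ⟨le_refl 0, zero_le_one, le_refl 0, by rw [mul_zero]; linarith⟩
      · have hyi : y i = πs / K.M := by simp only [hy]; rw [if_neg him, if_neg him1]
        have hdi : K.d i = K.M := by rw [KnapInstance.d, if_neg him]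
        have hMy : K.M * (πs / K.M) = πs := by field_simp
        rw [hyi, hdi]
        exact ⟨ht0, ht1, le_refl 0, by rw [hMy]; linarith⟩
  have hsum_y : ∑ i ∈ F, y i = (K.pp : ℝ) - ∑ i ∈ Finset.Icc 1 K.nn, x i := by
    rw [hxsplit, hF, key y]
    have e1 : (∑ i ∈ Finset.Icc 1 K.m, if x i = 0 then y i else 0)
        = ∑ i ∈ Finset.Icc 1 K.m, if x i = 0 then πs / K.M * (1 - K.a' i) else 0 := by
      refine Finset.sum_congr rfl (fun i hi => ?_)
      have him : i ≤ K.m := (Finset.mem_Icc.mp hi).2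
      have : y i = πs / K.M * (1 - K.a' i) := by simp only [hy]; rw [if_pos him]
      rw [this]
    have e2 : y (K.m+1) = 0 := by simp [hy]
    have e3 : ∑ i ∈ Finset.Icc (K.m+2) K.nn, y i
        = ((K.m:ℝ) - (K.A':ℝ) + 2) * (πs / K.M) := by
      have e : ∀ i ∈ Finset.Icc (K.m+2) K.nn, y i = πs / K.M := by
        intro i hi
        have h2 : K.m + 2 ≤ i := (Finset.mem_Icc.mp hi).1
        have hne : ¬ (i ≤ K.m) := by omega
        have hne1 : i ≠ K.m + 1 := by omega
        simp only [hy]; rw [if_neg hne, if_neg hne1]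
      rw [Finset.sum_congr rfl e, Finset.sum_const, nsmul_eq_mul, hcard2]
    rw [e1, e2, e3, ifsum (fun i => πs / K.M * (1 - K.a' i))]
    rw [← Finset.mul_sum, E1]
    have e4 : ∑ i ∈ Finset.Icc 1 K.m, (πs / K.M * (1 - K.a' i)) * x i
        = πs / K.M * (k - S) := by
      rw [← E2, Finset.mul_sum]
      exact Finset.sum_congr rfl (fun i hi => by ring)
    rw [e4]
    have hq : πs / K.M * (px + S - 1) = px := by
      rw [div_mul_eq_mul_div, hπsD, mul_div_cancel_left₀ px hMne]
    linear_combination hq + (1 - πs/K.M) * hpxk - (πs/K.M) * hppR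
  -- lower bound
  have hlb : ∀ val ∈ {val | ∃ y ρ : ℕ → ℝ,
      (∀ i ∈ Finset.Icc 1 K.nn, x i = 0 →
        (0 ≤ y i ∧ y i ≤ 1 ∧ 0 ≤ ρ i ∧ K.d i * y i ≤ πs + ρ i)) ∧
      (∑ i ∈ F, y i = (K.pp : ℝ) - ∑ i ∈ Finset.Icc 1 K.nn, x i) ∧
      val = ∑ i ∈ F, (K.cl i * y i + ρ i)}, T ≤ val := by
    rintro val ⟨y2, ρ, hc, hs, rfl⟩
    set μ : ℕ → ℝ := fun i => if i ≤ K.m then (1 - K.a' i) - (K.v i:ℝ)/K.M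
      else if i = K.m+1 then 0 else 1 with hμ
    have hpt : ∀ i ∈ F, K.M * y2 i - μ i * πs ≤ K.cl i * y2 i + ρ i := by
      intro i hiF
      rw [hF, Finset.mem_filter] at hiF
      obtain ⟨hi, hxi⟩ := hiF
      obtain ⟨hy0, hy1, hρ0, hcons⟩ := hc i hi hxi
      by_cases him : i ≤ K.m
      · have hi' : i ∈ Finset.Icc 1 K.m :=
          Finset.mem_Icc.mpr ⟨(Finset.mem_Icc.mp hi).1, him⟩
        have h1a := ha'1 i hi'
        have h0a := ha'0 i hi'
        have h1ne : (1 - K.a' i) ≠ 0 := ne_of_gt h1a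
        have hμi : μ i = (1 - K.a' i) - (K.v i:ℝ)/K.M := by
          simp only [hμ]; rw [if_pos him]
        have hcli : K.cl i = (K.v i:ℝ)/(1 - K.a' i) := by
          rw [KnapInstance.cl, if_pos him]
        have hdi : K.d i = K.M/(1 - K.a' i) := by rw [KnapInstance.d, if_pos him]
        have hvb : (K.v i:ℝ)/K.M ≤ 1/(K.b:ℝ) := aux_vM K i hi'
        have h1b := (aux_a'bound K i hi').1
        have hμ0 : 0 ≤ μ i := by rw [hμi]; linarith
        have hμ1 : μ i ≤ 1 := by
          rw [hμi]
          have hvnn : 0 ≤ (K.v i:ℝ)/K.M := by positivity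
          linarith
        have hclμd : K.cl i + μ i * K.d i = K.M := by
          rw [hcli, hμi, hdi]; field_simp; ring
        have p3 : μ i * (K.d i * y2 i) = K.M * y2 i - K.cl i * y2 i := by
          linear_combination y2 i * hclμd
        have q1 : μ i * (K.d i * y2 i) ≤ μ i * πs + μ i * ρ i := by
          have h := mul_le_mul_of_nonneg_left hcons hμ0
          have h2 : μ i * (πs + ρ i) = μ i * πs + μ i * ρ i := mul_add _ _ _
          linarith
        have q2 : μ i * ρ i ≤ ρ i := by
          have h := mul_le_mul_of_nonneg_right hμ1 hρ0
          linarith [one_mul (ρ i)]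
        linarith [p3, q1, q2]
      · by_cases him1 : i = K.m + 1
        · have hμi : μ i = 0 := by simp only [hμ]; rw [if_neg him, if_pos him1]
          have hcli : K.cl i = K.M := by rw [KnapInstance.cl, if_neg him, if_pos him1]
          rw [hμi, hcli, zero_mul]; linarith
        · have hμi : μ i = 1 := by simp only [hμ]; rw [if_neg him, if_neg him1]
          have hcli : K.cl i = 0 := by rw [KnapInstance.cl, if_neg him, if_neg him1]
          have hdi : K.d i = K.M := by rw [KnapInstance.d, if_neg him]
          rw [hμi, hcli]
          rw [hdi] at hcons
          linarith
    have hys : ∑ i ∈ F, y2 i = (K.pp:ℝ) - k := by rw [hs, hxsplit]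
    have hμsum : ∑ i ∈ F, μ i
        = (((K.m:ℝ) - (K.A':ℝ)) - (K.V:ℝ)/K.M - ((k - S) - (∑ i ∈ Finset.Icc 1 K.m, (K.v i:ℝ) * x i)/K.M))
          + (0 + ((K.m:ℝ) - (K.A':ℝ) + 2)) := by
      rw [hF, key μ]
      have e1 : (∑ i ∈ Finset.Icc 1 K.m, if x i = 0 then μ i else 0)
          = ∑ i ∈ Finset.Icc 1 K.m, if x i = 0 then (1 - K.a' i) - (K.v i:ℝ)/K.M else 0 := by
        refine Finset.sum_congr rfl (fun i hi => ?_)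
        have him : i ≤ K.m := (Finset.mem_Icc.mp hi).2
        have : μ i = (1 - K.a' i) - (K.v i:ℝ)/K.M := by simp only [hμ]; rw [if_pos him]
        rw [this]
      have e2 : μ (K.m+1) = 0 := by simp [hμ]
      have e3 : ∑ i ∈ Finset.Icc (K.m+2) K.nn, μ i = (K.m:ℝ) - (K.A':ℝ) + 2 := by
        have e : ∀ i ∈ Finset.Icc (K.m+2) K.nn, μ i = 1 := by
          intro i hi
          have h2 : K.m + 2 ≤ i := (Finset.mem_Icc.mp hi).1
          have hne : ¬ (i ≤ K.m) := by omega
          have hne1 : i ≠ K.m + 1 := by omega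
          simp only [hμ]; rw [if_neg hne, if_neg hne1]
        rw [Finset.sum_congr rfl e, Finset.sum_const, nsmul_eq_mul, hcard2, mul_one]
      rw [e1, e2, e3, ifsum (fun i => (1 - K.a' i) - (K.v i:ℝ)/K.M)]
      have e4 : ∑ i ∈ Finset.Icc 1 K.m, ((1 - K.a' i) - (K.v i:ℝ)/K.M)
          = ((K.m:ℝ) - (K.A':ℝ)) - (K.V:ℝ)/K.M := by
        rw [Finset.sum_sub_distrib, E1, ← Finset.sum_div, E3]
      have e5 : ∑ i ∈ Finset.Icc 1 K.m, ((1 - K.a' i) - (K.v i:ℝ)/K.M) * x i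
          = (k - S) - (∑ i ∈ Finset.Icc 1 K.m, (K.v i:ℝ) * x i)/K.M := by
        have ept : ∀ i ∈ Finset.Icc 1 K.m, ((1 - K.a' i) - (K.v i:ℝ)/K.M) * x i
            = (1 - K.a' i) * x i - ((K.v i:ℝ) * x i)/K.M := fun i hi => by ring
        rw [Finset.sum_congr rfl ept, Finset.sum_sub_distrib, E2, ← Finset.sum_div]
      rw [e4, e5]
    have hTeq : T = K.M * ((K.pp:ℝ) - k) - (∑ i ∈ F, μ i) * πs := by
      rw [hμsum, hT, hWdef]
      linear_combination hπsD + (K.M - πs) * hpxk - πs * hppR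
    calc T = K.M * ((K.pp:ℝ) - k) - (∑ i ∈ F, μ i) * πs := hTeq
      _ = ∑ i ∈ F, (K.M * y2 i - μ i * πs) := by
          rw [Finset.sum_sub_distrib, ← Finset.mul_sum, ← Finset.sum_mul, hys]
      _ ≤ ∑ i ∈ F, (K.cl i * y2 i + ρ i) := Finset.sum_le_sum hpt
  -- conclude
  have hleast : IsLeast {val | ∃ y ρ : ℕ → ℝ,
      (∀ i ∈ Finset.Icc 1 K.nn, x i = 0 →
        (0 ≤ y i ∧ y i ≤ 1 ∧ 0 ≤ ρ i ∧ K.d i * y i ≤ πs + ρ i)) ∧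
      (∑ i ∈ F, y i = (K.pp : ℝ) - ∑ i ∈ Finset.Icc 1 K.nn, x i) ∧
      val = ∑ i ∈ F, (K.cl i * y i + ρ i)} T :=
    ⟨⟨y, fun _ => 0, hfeas, hsum_y, hval⟩, hlb⟩
  rw [KnapInstance.g]
  exact hleast.csInf_eq
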